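/- The star-K-Scheepers property is hereditary for clopen subsets: if X is star-K-Scheepers and A ⊆ X is clopen, then A (with the subspace topology) is star-K-Scheepers. -/

import Mathlib

open Set

/-- Star of a set `A` with respect to a family `P`: `St(A,P) = ⋃{B ∈ P : A ∩ B ≠ ∅}`. -/
def st {X : Type*} (A : Set X) (P : Set (Set X)) : Set X :=
  ⋃₀ {B | B ∈ P ∧ (A ∩ B).Nonempty}

/-- `U` is an open cover of the space. -/
def IsOpenCover {X : Type*} [TopologicalSpace X] (U : Set (Set X)) : Prop :=
  (∀ V ∈ U, IsOpen V) ∧ ⋃₀ U = Set.univ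

/-- An ω-cover: an open cover such that every finite subset lies in some member. -/
def IsOmegaCover {X : Type*} [TopologicalSpace X] (U : Set (Set X)) : Prop :=
  IsOpenCover U ∧ ∀ F : Set X, F.Finite → ∃ V ∈ U, F ⊆ V

/-- The star-K-Scheepers property. -/
def StarKScheepers (X : Type*) [TopologicalSpace X] : Prop :=
  ∀ U : ℕ → Set (Set X), (∀ n, IsOpenCover (U n)) →
    ∃ K : ℕ → Set X, (∀ n, IsCompact (K n)) ∧
      IsOmegaCover {S | ∃ n, S = st (K n) (U n)}

/-!
An open cover `U` of the clopen set `A` extends to the open cover `U ∪ {Aᶜ}` of `X`. Stars of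
compact sets `K` of `X` with respect to the extended cover meet `A` only through members of `U`,
so the traces `K ∩ A`, which are compact since `A` is closed, witness the property for `A`.
-/

def extendCover {X : Type*} (A : Set X) (U : Set (Set A)) : Set (Set X) :=
  (Subtype.val '' ·) '' U ∪ {Aᶜ}

theorem isOpen_st {X : Type*} [TopologicalSpace X] (K : Set X) {P : Set (Set X)}
    (hP : ∀ V ∈ P, IsOpen V) : IsOpen (st K P) :=
  isOpen_sUnion fun B hB => hP B hB.1

theorem IsOmegaCover.of_forall_finite {X : Type*} [TopologicalSpace X] {U : Set (Set X)}
    (hopen : ∀ V ∈ U, IsOpen V) (hfin : ∀ F : Set X, F.Finite → ∃ V ∈ U, F ⊆ V) :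
    IsOmegaCover U := by
  refine ⟨⟨hopen, eq_univ_of_forall fun x => ?_⟩, hfin⟩
  obtain ⟨V, hV, hxV⟩ := hfin {x} (finite_singleton x)
  exact ⟨V, hV, hxV rfl⟩

theorem IsOpenCover.extendCover {X : Type*} [TopologicalSpace X] {A : Set X} (hA : IsClopen A)
    {U : Set (Set A)} (hU : IsOpenCover U) : IsOpenCover (extendCover A U) := by
  refine ⟨?_, eq_univ_of_forall fun x => ?_⟩
  · rintro B (⟨W, hW, rfl⟩ | rfl)
    · exact hA.isOpen.isOpenMap_subtype_val W (hU.1 W hW)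
    · exact hA.isClosed.isOpen_compl
  by_cases hx : x ∈ A
  · obtain ⟨W, hW, hxW⟩ : (⟨x, hx⟩ : A) ∈ ⋃₀ U := hU.2 ▸ mem_univ _
    exact ⟨Subtype.val '' W, Or.inl ⟨W, hW, rfl⟩, ⟨x, hx⟩, hxW, rfl⟩
  · exact ⟨Aᶜ, Or.inr rfl, hx⟩

theorem preimage_val_st_extendCover_subset {X : Type*} (A : Set X) (K : Set X)
    (U : Set (Set A)) :
    Subtype.val ⁻¹' st K (extendCover A U) ⊆ st (Subtype.val ⁻¹' K) U := by
  rintro x ⟨B, ⟨⟨W, hW, rfl⟩ | rfl, y, hyK, hyB⟩, hxB⟩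
  · obtain ⟨y, hyW, rfl⟩ := hyB
    obtain ⟨x', hx'W, hx'⟩ := hxB
    obtain rfl : x' = x := Subtype.val_injective hx'
    exact ⟨W, ⟨hW, y, hyK, hyW⟩, hx'W⟩
  · exact absurd x.2 hxB

/-- The star-K-Scheepers property is hereditary for clopen subsets. -/
theorem starKScheepers_clopen_subset {X : Type*} [TopologicalSpace X]
    (hX : StarKScheepers X) (A : Set X) (hA : IsClopen A) :
    StarKScheepers A := by
  intro U hU
  obtain ⟨K, hK, hKω⟩ := hX (fun n => extendCover A (U n)) fun n => (hU n).extendCover hA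
  refine ⟨fun n => Subtype.val ⁻¹' K n,
    fun n => hA.isClosed.isClosedEmbedding_subtypeVal.isCompact_preimage (hK n), ?_⟩
  refine IsOmegaCover.of_forall_finite ?_ fun F hF => ?_
  · rintro S ⟨n, rfl⟩
    exact isOpen_st _ (hU n).1
  obtain ⟨S, ⟨n, rfl⟩, hFS⟩ := hKω.2 (Subtype.val '' F) (hF.image _)
  exact ⟨_, ⟨n, rfl⟩, fun x hx =>
    preimage_val_st_extendCover_subset A (K n) (U n) (hFS ⟨x, hx, rfl⟩)⟩
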